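/- arXiv:1902.06403 — 2 statements merged into one kernel-verified Lean document; each statement's English description precedes it below -/
import Mathlib

section
/- For every even s ≥ t and every k ≥ 1, there exists a k-connected balanced bipartite graph G such that G_B^t is not Hamiltonian. Concretely: let V_0, V_1, ..., V_{s+1} be disjoint vertex sets with |V_0| = |V_{s+1}| > sk/2 and |V_i| = k for 1 ≤ i ≤ s, and let G be the graph obtained by adding all edges between V_i and V_{i+1} for 0 ≤ i ≤ s; then G is k-connected, balanced bipartite, and V_0 ∪ V_{s+1} is an independent set in G_B^t of size exceeding |V(G)|/2, so G_B^t is not Hamiltonian. -/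
/-- The `t`-th bi-power of a graph `G`: two vertices are adjacent iff their
distance in `G` is odd and at most `t`. -/
def SimpleGraph.biPower {V : Type*} (G : SimpleGraph V) (t : ℕ) : SimpleGraph V where
  Adj x y := Odd (G.dist x y) ∧ G.dist x y ≤ t
  symm := ⟨fun x y h => by rwa [SimpleGraph.dist_comm]⟩
  loopless := ⟨fun x h => by simp [SimpleGraph.dist_self, Nat.odd_iff] at h⟩

/-- Sizes of the layers: the first and last layer have size `m`, the middle
layers have size `k`. -/
def layerSize (s k m : ℕ) (i : Fin (s + 2)) : ℕ :=
  if i = 0 ∨ i = Fin.last (s + 1) then m else k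

/-- The layered graph on `V_0, V_1, …, V_{s+1}` with all edges between
consecutive layers. -/
def layerGraph (s k m : ℕ) : SimpleGraph (Σ i : Fin (s + 2), Fin (layerSize s k m i)) where
  Adj a b := a.1.val + 1 = b.1.val ∨ b.1.val + 1 = a.1.val
  symm := ⟨fun a b h => h.symm⟩
  loopless := ⟨fun a h => by rcases h with h | h <;> omega⟩

/-- A graph is `k`-connected if it has more than `k` vertices and deleting any
set of fewer than `k` vertices leaves a connected graph. -/
def KConnected {V : Type*} [Fintype V] (G : SimpleGraph V) (k : ℕ) : Prop :=
  k < Fintype.card V ∧ ∀ S : Finset V, S.card < k → (G.induce ((S : Set V)ᶜ)).Connected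


/-!
Every edge of `G` joins consecutive layers, so a walk from `V_0` to `V_{s+1}` has length at
least `s + 1 > t`, and a walk from a layer back to the same layer has even length. Hence
`V_0 ∪ V_{s+1}` is independent in `G_B^t`, with `2m > |V(G)| / 2` vertices. A Hamiltonian cycle
rules this out: each vertex of an independent set `I` is the head of one of its `|V|` darts and
the tail of another, and no dart has both ends in `I`, so `2 |I| ≤ |V|`.

Reflecting the layers, `i ↦ s + 1 - i`, flips parity since `s` is even, so it matches the even
layers with the odd ones. As every layer has at least `k` vertices, deleting fewer than `k`
vertices leaves a vertex in each layer, and these chain the remaining graph together.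
-/

open SimpleGraph

theorem List.countP_mem_eq_ncard {α : Type*} [Fintype α] {l : List α} (hl : l.Nodup)
    (hmem : ∀ a, a ∈ l) (s : Set α) [DecidablePred (· ∈ s)] :
    l.countP (· ∈ s) = s.ncard := by
  classical
  rw [← hl.card_eq_countP, Set.ncard_eq_toFinset_card']
  congr 1
  ext a
  simp [hmem]

namespace SimpleGraph

variable {V : Type*} {G : SimpleGraph V}

theorem Walk.IsHamiltonianCycle.two_mul_ncard_le_of_isIndepSet [Fintype V] [DecidableEq V]
    {a : V} {p : G.Walk a a} (hp : p.IsHamiltonianCycle) {s : Set V} (hs : G.IsIndepSet s) :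
    2 * s.ncard ≤ Fintype.card V := by
  classical
  have htail : p.tail.support = p.support.tail := p.support_tail_of_not_nil hp.not_nil
  have hsnd : (p.darts.map (·.snd)).countP (· ∈ s) = s.ncard := by
    rw [Walk.map_snd_darts, ← htail]
    exact List.countP_mem_eq_ncard hp.isHamiltonian_tail.isPath.support_nodup
      hp.isHamiltonian_tail.mem_support s
  have hfst : (p.darts.map (·.fst)).countP (· ∈ s) = s.ncard := by
    rw [Walk.map_fst_darts, ← Walk.support_dropLast hp.not_nil,
      ← p.support_tail_perm_support_dropLast.countP_eq, htail, ← Walk.map_snd_darts, hsnd]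
  simp only [List.countP_map, Function.comp_def] at hsnd hfst
  have hdisj : p.darts.countP (fun d => d.snd ∈ s) ≤ p.darts.countP (fun d => d.fst ∉ s) :=
    List.countP_mono_left fun d _ hd => by
      simpa using fun hd' => hs hd' (by simpa using hd) d.adj.ne d.adj
  have hlen := List.length_eq_countP_add_countP (fun d : G.Dart => d.fst ∈ s) (l := p.darts)
  simp only [decide_eq_true_eq, Walk.length_darts, hp.length_eq] at hlen
  omega

theorem IsIndepSet.not_isHamiltonian [Fintype V] [DecidableEq V] {s : Set V}
    (hs : G.IsIndepSet s) (hV : Fintype.card V ≠ 1) (hcard : Fintype.card V < 2 * s.ncard) :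
    ¬ G.IsHamiltonian := fun hG => by
  obtain ⟨_, _, hp⟩ := hG hV
  exact (hp.two_mul_ncard_le_of_isIndepSet hs).not_gt hcard

namespace Walk

variable (f : V → ℕ) (hf : ∀ ⦃u v⦄, G.Adj u v → f u + 1 = f v ∨ f v + 1 = f u)
include hf

theorem le_add_length_of_adj_succ {u v : V} (p : G.Walk u v) : f v ≤ f u + p.length := by
  induction p with
  | nil => simp
  | cons h _ ih => rw [length_cons]; have := hf h; omega

theorem even_add_add_length_of_adj_succ {u v : V} (p : G.Walk u v) :
    Even (f u + f v + p.length) := by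
  induction p with
  | nil => simp
  | cons h _ ih =>
    rw [length_cons]; rw [Nat.even_iff] at ih ⊢; have := hf h; omega

end Walk

end SimpleGraph

theorem exists_sigma_mk_notMem_of_card_lt {ι : Type*} {β : ι → Type*} [∀ i, Fintype (β i)]
    (S : Finset (Σ i, β i)) (i : ι) (h : S.card < Fintype.card (β i)) :
    ∃ x, (⟨i, x⟩ : Σ i, β i) ∉ S := by
  by_contra! hS
  exact h.not_ge (Finset.card_le_card_of_injOn (Sigma.mk i) (fun x _ => hS x)
    sigma_mk_injective.injOn)

abbrev LayerVertex (s k m : ℕ) := Σ i : Fin (s + 2), Fin (layerSize s k m i)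

section

variable {s k m : ℕ}

theorem card_layerVertex : Fintype.card (LayerVertex s k m) = 2 * m + s * k := by
  rw [Fintype.card_sigma, Fin.sum_univ_succ, Fin.sum_univ_castSucc]
  simp [layerSize, Fin.ext_iff, fun x : Fin s => x.isLt.ne]
  ring

theorem ncard_layerVertex_ends :
    {a : LayerVertex s k m | a.1 = 0 ∨ a.1 = Fin.last (s + 1)}.ncard = 2 * m := by
  have : {a : LayerVertex s k m | a.1 = 0 ∨ a.1 = Fin.last (s + 1)} =
      ((({0, Fin.last (s + 1)} : Finset (Fin (s + 2))).sigma fun _ => Finset.univ :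
        Finset (LayerVertex s k m)) : Set (LayerVertex s k m)) := by
    ext a; simp
  rw [this, Set.ncard_coe_finset, Finset.card_sigma, Finset.sum_pair (by simp [Fin.ext_iff])]
  simp only [Finset.card_fin]
  simp [layerSize, two_mul]

theorem layerGraph_biPower_isIndepSet_ends {t : ℕ} (hs : Even s) (hts : t ≤ s) :
    ((layerGraph s k m).biPower t).IsIndepSet
      {a : LayerVertex s k m | a.1 = 0 ∨ a.1 = Fin.last (s + 1)} := by
  intro u hu v hv _ ⟨hodd, hle⟩
  obtain ⟨p, hp⟩ := exists_walk_of_dist_ne_zero hodd.pos.ne'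
  have hfu : u.1.val = 0 ∨ u.1.val = s + 1 := by rcases hu with h | h <;> simp [h]
  have hfv : v.1.val = 0 ∨ v.1.val = s + 1 := by rcases hv with h | h <;> simp [h]
  have hf : ∀ ⦃a b : LayerVertex s k m⦄, (layerGraph s k m).Adj a b →
      a.1.val + 1 = b.1.val ∨ b.1.val + 1 = a.1.val := fun _ _ h => h
  have h₁ := p.le_add_length_of_adj_succ (fun a => a.1.val) hf
  have h₂ := p.reverse.le_add_length_of_adj_succ (fun a => a.1.val) hf
  have h₃ := p.even_add_add_length_of_adj_succ (fun a => a.1.val) hf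
  rw [Walk.length_reverse] at h₂
  rw [hp] at h₁ h₂ h₃
  rw [Nat.odd_iff] at hodd
  rw [Nat.even_iff] at h₃ hs
  omega

theorem layerSize_rev (i : Fin (s + 2)) : layerSize s k m i.rev = layerSize s k m i := by
  simp only [layerSize, Fin.rev_eq_iff, Fin.rev_zero, Fin.rev_last, or_comm]

def layerReflect : LayerVertex s k m ≃ LayerVertex s k m :=
  (Equiv.sigmaCongrRight fun i => finCongr (layerSize_rev i).symm).trans
    (Equiv.sigmaCongrLeft (β := fun i => Fin (layerSize s k m i)) Fin.revPerm)

@[simp]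
theorem layerReflect_fst (a : LayerVertex s k m) : (layerReflect a).1 = a.1.rev := rfl

theorem ncard_even_layers_eq_ncard_odd_layers (hs : Even s) :
    {a : LayerVertex s k m | Even a.1.val}.ncard =
      {a : LayerVertex s k m | Odd a.1.val}.ncard := by
  have : {a : LayerVertex s k m | Odd a.1.val} = layerReflect ⁻¹' {a | Even a.1.val} := by
    ext a
    have := a.1.isLt
    simp only [Set.mem_ofPred_eq, Set.mem_preimage, layerReflect_fst, Fin.val_rev,
      ← Nat.not_even_iff_odd, Nat.even_iff] at hs ⊢
    omega
  rw [this, Set.ncard_preimage_of_injective_subset_range layerReflect.injective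
    (by simp [layerReflect.surjective.range_eq])]

theorem layerGraph_exists_balanced_bipartition (hs : Even s) :
    ∃ X Y : Set (LayerVertex s k m),
      (∀ v, v ∈ X ∨ v ∈ Y) ∧ Disjoint X Y ∧ X.ncard = Y.ncard ∧
      (∀ u v, (layerGraph s k m).Adj u v → (u ∈ X ∧ v ∈ Y) ∨ (u ∈ Y ∧ v ∈ X)) := by
  refine ⟨{a | Even a.1.val}, {a | Odd a.1.val}, fun v => Nat.even_or_odd _,
    Set.disjoint_left.mpr fun a ha => Nat.not_odd_iff_even.mpr ha,
    ncard_even_layers_eq_ncard_odd_layers hs, fun u v huv => ?_⟩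
  simp only [Set.mem_ofPred_eq, ← Nat.not_even_iff_odd, Nat.even_iff]
  rcases huv with h | h <;> omega

theorem layerGraph_induce_compl_connected (S : Finset (LayerVertex s k m))
    (hS : ∀ i, S.card < layerSize s k m i) :
    ((layerGraph s k m).induce ((S : Set (LayerVertex s k m))ᶜ)).Connected := by
  set H := (layerGraph s k m).induce ((S : Set (LayerVertex s k m))ᶜ)
  choose w hw using fun i => exists_sigma_mk_notMem_of_card_lt S i (by simpa using hS i)
  let W : Fin (s + 2) → ((S : Set (LayerVertex s k m))ᶜ : Set _) :=
    fun i => ⟨⟨i, w i⟩, hw i⟩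
  have hW : ∀ i, H.Reachable (W 0) (W i) := by
    exact Fin.induction .rfl fun i ih => ih.trans (Adj.reachable (.inl rfl))
  have hreach : ∀ v, H.Reachable (W 0) v := by
    intro v
    obtain ⟨j, hj⟩ : ∃ j : Fin (s + 2), j.val + 1 = v.1.1.val ∨ v.1.1.val + 1 = j.val := by
      by_cases hv : v.1.1.val = s + 1
      · exact ⟨⟨s, by omega⟩, by simp [hv]⟩
      · exact ⟨⟨v.1.1.val + 1, by omega⟩, by simp⟩
    exact (hW j).trans (Adj.reachable hj)
  have : Nonempty ((S : Set (LayerVertex s k m))ᶜ : Set _) := ⟨W 0⟩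
  exact ⟨fun u v => (hreach u).symm.trans (hreach v)⟩

theorem layerGraph_kConnected (hm : 0 < m) (hkm : k ≤ m) : KConnected (layerGraph s k m) k := by
  refine ⟨by rw [card_layerVertex]; omega, fun S hS => layerGraph_induce_compl_connected S ?_⟩
  intro i
  unfold layerSize
  split_ifs <;> omega

end

theorem layerGraph_not_hamiltonian_general (t s k m : ℕ)
    (ht : 1 ≤ t) (hts : t ≤ s) (hs : Even s) (hm : s * k < 2 * m) :
    KConnected (layerGraph s k m) k ∧
    (∃ X Y : Set (Σ i : Fin (s + 2), Fin (layerSize s k m i)),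
      (∀ v, v ∈ X ∨ v ∈ Y) ∧ Disjoint X Y ∧ X.ncard = Y.ncard ∧
      (∀ u v, (layerGraph s k m).Adj u v → (u ∈ X ∧ v ∈ Y) ∨ (u ∈ Y ∧ v ∈ X))) ∧
    ({a : Σ i : Fin (s + 2), Fin (layerSize s k m i) | a.1 = 0 ∨ a.1 = Fin.last (s + 1)}.Pairwise
      (fun u v => ¬ ((layerGraph s k m).biPower t).Adj u v)) ∧
    2 * {a : Σ i : Fin (s + 2), Fin (layerSize s k m i) | a.1 = 0 ∨ a.1 = Fin.last (s + 1)}.ncard >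
      Fintype.card (Σ i : Fin (s + 2), Fin (layerSize s k m i)) ∧
    ¬ ((layerGraph s k m).biPower t).IsHamiltonian := by
  have hs2 : 2 ≤ s := by obtain ⟨r, rfl⟩ := hs; omega
  have hkm : k ≤ m := by nlinarith
  have hindep := layerGraph_biPower_isIndepSet_ends (k := k) (m := m) hs hts
  have hbig : Fintype.card (LayerVertex s k m) <
      2 * {a : LayerVertex s k m | a.1 = 0 ∨ a.1 = Fin.last (s + 1)}.ncard := by
    rw [card_layerVertex, ncard_layerVertex_ends]; omega
  refine ⟨layerGraph_kConnected (by omega) hkm, layerGraph_exists_balanced_bipartition hs,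
    hindep, hbig, hindep.not_isHamiltonian ?_ hbig⟩
  rw [card_layerVertex]; omega

/-- For every even `s ≥ t` (with `t, k ≥ 1`) the concrete layered graph `G`
with `|V_0| = |V_{s+1}| = m > sk/2` and `|V_i| = k` (`1 ≤ i ≤ s`) is
`k`-connected and balanced bipartite, `V_0 ∪ V_{s+1}` is an independent set
of `G_B^t` of size exceeding `|V(G)|/2`, and `G_B^t` is not Hamiltonian.  In
particular, for every even `s ≥ t` and `k ≥ 1` there is a `k`-connected
balanced bipartite graph whose `t`-th bi-power is not Hamiltonian. -/
theorem layerGraph_not_hamiltonian (t s k m : ℕ)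
    (ht : 1 ≤ t) (hts : t ≤ s) (hs : Even s) (hk : 1 ≤ k) (hm : s * k < 2 * m) :
    KConnected (layerGraph s k m) k ∧
    (∃ X Y : Set (Σ i : Fin (s + 2), Fin (layerSize s k m i)),
      (∀ v, v ∈ X ∨ v ∈ Y) ∧ Disjoint X Y ∧ X.ncard = Y.ncard ∧
      (∀ u v, (layerGraph s k m).Adj u v → (u ∈ X ∧ v ∈ Y) ∨ (u ∈ Y ∧ v ∈ X))) ∧
    ({a : Σ i : Fin (s + 2), Fin (layerSize s k m i) | a.1 = 0 ∨ a.1 = Fin.last (s + 1)}.Pairwise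
      (fun u v => ¬ ((layerGraph s k m).biPower t).Adj u v)) ∧
    2 * {a : Σ i : Fin (s + 2), Fin (layerSize s k m i) | a.1 = 0 ∨ a.1 = Fin.last (s + 1)}.ncard >
      Fintype.card (Σ i : Fin (s + 2), Fin (layerSize s k m i)) ∧
    ¬ ((layerGraph s k m).biPower t).IsHamiltonian :=
  layerGraph_not_hamiltonian_general t s k m ht hts hs hm
end

section
/- Let T be a finite tree with a perfect matching M, xy ∈ M, and let H be a component of T − {x, y} with a neighbor of x. Then M restricted to H is a perfect matching of H, and there exists an edge x'y' ∈ M with x', y' ∈ V(H) such that y' is adjacent to x in T. -/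
/-- The graph obtained from `G` by deleting the vertices in `s` (keeping the
vertex type, the deleted vertices become isolated). -/
def SimpleGraph.removeVerts {V : Type*} (G : SimpleGraph V) (s : Set V) : SimpleGraph V where
  Adj a b := G.Adj a b ∧ a ∉ s ∧ b ∉ s
  symm := ⟨fun a b h => by
    exact ⟨h.1.symm, h.2.2, h.2.1⟩⟩
  loopless := ⟨fun a h => G.loopless.irrefl a h.1⟩

/-! Since `xy ∈ M`, the `M`-partner of a vertex other than `x` and `y` is again neither `x` nor
`y`, so matching edges never leave a component of `T - {x, y}`. Hence every vertex of `H` is matched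
inside `H`, and the matching edge at the neighbour of `x` in `H` is the required `x'y'`. -/

namespace SimpleGraph

variable {V : Type*} {G : SimpleGraph V}

theorem Reachable.notMem_of_removeVerts {s : Set V} {a b : V} (ha : a ∉ s)
    (h : (G.removeVerts s).Reachable a b) : b ∉ s := by
  obtain ⟨p⟩ := h.symm
  cases p with
  | nil => exact ha
  | cons hadj _ => exact hadj.2.1

namespace Subgraph

theorem IsMatching.notMem_pair_of_adj {M : G.Subgraph} (hM : M.IsMatching) {x y v w : V}
    (hxy : M.Adj x y) (hvw : M.Adj v w) (hv : v ∉ ({x, y} : Set V)) :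
    w ∉ ({x, y} : Set V) := by
  rintro (rfl | rfl)
  · exact hv (Or.inr (hM.eq_of_adj_right hvw hxy.symm))
  · exact hv (Or.inl (hM.eq_of_adj_right hvw hxy))

theorem IsMatching.reachable_removeVerts_pair {M : G.Subgraph} (hM : M.IsMatching)
    {x y a v w : V} (hxy : M.Adj x y) (ha : a ∉ ({x, y} : Set V))
    (hav : (G.removeVerts {x, y}).Reachable a v) (hvw : M.Adj v w) :
    (G.removeVerts {x, y}).Reachable a w := by
  have hv := hav.notMem_of_removeVerts ha
  exact hav.trans (Adj.reachable ⟨M.adj_sub hvw, hv, hM.notMem_pair_of_adj hxy hvw hv⟩)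

end Subgraph

end SimpleGraph

theorem component_matching_edge_general {V : Type*}
    (T : SimpleGraph V) (M : T.Subgraph) (hM : M.IsPerfectMatching)
    (x y : V) (hxy : M.Adj x y)
    (a : V) (hax : a ≠ x) (hay : a ≠ y)
    (H : Set V) (hH : H = {b | (T.removeVerts {x, y}).Reachable a b})
    (hnbr : ∃ v ∈ H, T.Adj x v) :
    (∀ v ∈ H, ∃ w ∈ H, M.Adj v w) ∧
    (∃ x' y' : V, x' ∈ H ∧ y' ∈ H ∧ M.Adj x' y' ∧ T.Adj x y') := by
  have ha : a ∉ ({x, y} : Set V) := by simp [hax, hay]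
  have hpartner : ∀ v ∈ H, ∃ w ∈ H, M.Adj v w := by
    subst hH
    intro v hv
    obtain ⟨w, hvw, -⟩ := hM.1 (hM.2 v)
    exact ⟨w, hM.1.reachable_removeVerts_pair hxy ha hv hvw, hvw⟩
  obtain ⟨v, hv, hxv⟩ := hnbr
  obtain ⟨w, hw, hvw⟩ := hpartner v hv
  exact ⟨hpartner, w, v, hw, hv, hvw.symm, hxv⟩

/-- Let `T` be a finite tree with a perfect matching `M`, `xy ∈ M`, and let
`H` be a component of `T - {x, y}` containing a neighbour of `x`.  Then `M`
restricted to `H` is a perfect matching of `H` (every vertex of `H` is matched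
within `H`), and there is an edge `x'y' ∈ M` with `x', y' ∈ H` such that `y'`
is adjacent to `x` in `T`. -/
theorem component_matching_edge {V : Type*} [Fintype V]
    (T : SimpleGraph V) (hT : T.IsTree) (M : T.Subgraph) (hM : M.IsPerfectMatching)
    (x y : V) (hxy : M.Adj x y)
    (a : V) (hax : a ≠ x) (hay : a ≠ y)
    (H : Set V) (hH : H = {b | (T.removeVerts {x, y}).Reachable a b})
    (hnbr : ∃ v ∈ H, T.Adj x v) :
    (∀ v ∈ H, ∃ w ∈ H, M.Adj v w) ∧
    (∃ x' y' : V, x' ∈ H ∧ y' ∈ H ∧ M.Adj x' y' ∧ T.Adj x y') :=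
  component_matching_edge_general T M hM x y hxy a hax hay H hH hnbr
end
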